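/- If choice functions are fully substitutable, separable, and satisfy IRC, then an outcome is fully trail-stable if and only if it is trail-stable. -/

import Mathlib

variable {F X : Type*} [DecidableEq X] [DecidableEq F]

/-- Contracts in `Y` involving agent `f` (as buyer or seller). -/
def Xf (b s : X → F) (f : F) (Y : Finset X) : Finset X :=
  Y.filter (fun x => b x = f ∨ s x = f)

/-- Upstream contracts of `f` in `Y`. -/
def Yb (b : X → F) (f : F) (Y : Finset X) : Finset X := Y.filter (fun x => b x = f)

/-- Downstream contracts of `f` in `Z`. -/
def Zs (s : X → F) (f : F) (Z : Finset X) : Finset X := Z.filter (fun x => s x = f)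

/-- Chosen upstream contracts of `f` from upstream offers `Y` and downstream offers `Z`. -/
def CB (b s : X → F) (C : F → Finset X → Finset X) (f : F) (Y Z : Finset X) : Finset X :=
  (C f (Yb b f Y ∪ Zs s f Z)).filter (fun x => b x = f)

/-- Chosen downstream contracts of `f` from downstream offers `Z` and upstream offers `Y`. -/
def CS (b s : X → F) (C : F → Finset X → Finset X) (f : F) (Z Y : Finset X) : Finset X :=
  (C f (Zs s f Z ∪ Yb b f Y)).filter (fun x => s x = f)

/-- Rejected upstream contracts. -/
def RB (b s : X → F) (C : F → Finset X → Finset X) (f : F) (Y Z : Finset X) : Finset X :=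
  Yb b f Y \ CB b s C f Y Z

/-- Rejected downstream contracts. -/
def RS (b s : X → F) (C : F → Finset X → Finset X) (f : F) (Z Y : Finset X) : Finset X :=
  Zs s f Z \ CS b s C f Z Y

/-- Full substitutability: same-side substitutability and cross-side complementarity. -/
def FullySubstitutable (b s : X → F) (C : F → Finset X → Finset X) : Prop :=
  (∀ (f : F) (Y' Y Z : Finset X), Y' ⊆ Y → RB b s C f Y' Z ⊆ RB b s C f Y Z) ∧
  (∀ (f : F) (Z' Z Y : Finset X), Z' ⊆ Z → RS b s C f Z' Y ⊆ RS b s C f Z Y) ∧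
  (∀ (f : F) (Y Z' Z : Finset X), Z' ⊆ Z → RB b s C f Y Z ⊆ RB b s C f Y Z') ∧
  (∀ (f : F) (Z Y' Y : Finset X), Y' ⊆ Y → RS b s C f Z Y ⊆ RS b s C f Z Y')

/-- Irrelevance of rejected contracts. -/
def IRC (C : F → Finset X → Finset X) : Prop :=
  ∀ (f : F) (Y Z : Finset X), C f Y ⊆ Z → Z ⊆ Y → C f Z = C f Y

/-- `A` is `(W,f)`-rational: `A_f ⊆ C^f(W_f ∪ A_f)`. -/
def Rational (b s : X → F) (C : F → Finset X → Finset X) (W A : Finset X) (f : F) : Prop :=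
  Xf b s f A ⊆ C f (Xf b s f W ∪ Xf b s f A)

/-- `A` is acceptable (individually rational for all agents). -/
def Acceptable (b s : X → F) (C : F → Finset X → Finset X) (A : Finset X) : Prop :=
  ∀ f : F, C f (Xf b s f A) = Xf b s f A

/-- `{y,z}` is a `(W,f)`-rational pair: jointly but not individually `(W,f)`-rational. -/
def RationalPair (b s : X → F) (C : F → Finset X → Finset X) (W : Finset X) (f : F)
    (y z : X) : Prop :=
  ¬ Rational b s C W {y} f ∧ ¬ Rational b s C W {z} f ∧ Rational b s C W {y, z} f

/-- A locally blocking trail to outcome `A`. -/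
def LocallyBlockingTrail (b s : X → F) (C : F → Finset X → Finset X) (A : Finset X) : Prop :=
  ∃ (M : ℕ) (x : ℕ → X), 0 < M ∧
    (∀ i j, i < M → j < M → x i = x j → i = j) ∧
    (∀ i, i + 1 < M → b (x i) = s (x (i + 1))) ∧
    (∀ i, i < M → x i ∉ A) ∧
    Rational b s C A {x 0} (s (x 0)) ∧
    (∀ i, 0 < i → i < M → Rational b s C A {x (i - 1), x i} (b (x (i - 1)))) ∧
    Rational b s C A {x (M - 1)} (b (x (M - 1)))

/-- A blocking trail to outcome `A` (with initial- or final-segment rationality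
at intermediate agents). -/
def BlockingTrail (b s : X → F) (C : F → Finset X → Finset X) (A : Finset X) : Prop :=
  ∃ (M : ℕ) (x : ℕ → X), 0 < M ∧
    (∀ i j, i < M → j < M → x i = x j → i = j) ∧
    (∀ i, i + 1 < M → b (x i) = s (x (i + 1))) ∧
    (∀ i, i < M → x i ∉ A) ∧
    Rational b s C A {x 0} (s (x 0)) ∧
    ((∀ i, 0 < i → i < M →
        Rational b s C A ((Finset.range (i + 1)).image x) (b (x (i - 1)))) ∨
     (∀ i, 0 < i → i < M →
        Rational b s C A ((Finset.Ico (i - 1) M).image x) (b (x (i - 1))))) ∧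
    Rational b s C A {x (M - 1)} (b (x (M - 1)))

/-- Fully trail-stable outcome. -/
def FullyTrailStable (b s : X → F) (C : F → Finset X → Finset X) (A : Finset X) : Prop :=
  Acceptable b s C A ∧ ¬ LocallyBlockingTrail b s C A

/-- Trail-stable outcome. -/
def TrailStable (b s : X → F) (C : F → Finset X → Finset X) (A : Finset X) : Prop :=
  Acceptable b s C A ∧ ¬ BlockingTrail b s C A

/-- Set-stable outcome. -/
def SetStable (b s : X → F) (C : F → Finset X → Finset X) (A : Finset X) : Prop :=
  Acceptable b s C A ∧
  ¬ ∃ Z : Finset X, Z.Nonempty ∧ Disjoint Z A ∧ ∀ f : F, Rational b s C A Z f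

/-- Separable choice functions. -/
def Separable (b s : X → F) (C : F → Finset X → Finset X) : Prop :=
  ∀ (f : F) (A W : Finset X) (y z : X), b y = f → s z = f → y ∉ A → z ∉ A →
    Rational b s C W A f → RationalPair b s C W f y z →
    Rational b s C W (A ∪ {y, z}) f

/-- Simple choice functions (with an intensity map). -/
def Simple (b s : X → F) (C : F → Finset X → Finset X) : Prop :=
  ∀ f : F, ∃ w : X → ℝ, ∀ (W A : Finset X), Acceptable b s C A →
    Rational b s C W A f →
    ∀ y ∈ A, b y = f → ∃ z ∈ A, s z = f ∧ w y > w z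

/-- Aggregate upstream rejection function. -/
def RBagg [Fintype F] (b s : X → F) (C : F → Finset X → Finset X) (Y Z : Finset X) : Finset X :=
  (Finset.univ : Finset F).biUnion (fun f => RB b s C f Y Z)

/-- Aggregate downstream rejection function. -/
def RSagg [Fintype F] (b s : X → F) (C : F → Finset X → Finset X) (Z Y : Finset X) : Finset X :=
  (Finset.univ : Finset F).biUnion (fun f => RS b s C f Z Y)

/-!
A blocking trail with rational initial segments yields a locally blocking one, built contract by
contract: the rational set at the agent of the current step has a minimal subset supporting the
choice of the current contract, and substitutability and IRC split it into a rational singleton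
or a rational pair, which either ends a locally blocking trail or extends one. Final segments
reduce to initial ones by reversing the trail and exchanging buyers and sellers. Conversely, in a
shortest locally blocking trail no inner contract is rational on its own, so consecutive contracts
form rational pairs, and separability assembles them into rational initial segments.
-/

open Finset

def UpstreamSubstitutable (b s : X → F) (C : F → Finset X → Finset X) : Prop :=
  ∀ (f : F) (Y' Y Z : Finset X), Y' ⊆ Y → RB b s C f Y' Z ⊆ RB b s C f Y Z

section Choice

variable {b s : X → F} {C : F → Finset X → Finset X} {f : F}

lemma FullySubstitutable.upstream (h : FullySubstitutable b s C) :
    UpstreamSubstitutable b s C :=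
  h.1

/-- Downstream substitutability is upstream substitutability with buyers and sellers exchanged. -/
lemma FullySubstitutable.downstream (h : FullySubstitutable b s C) :
    UpstreamSubstitutable s b C :=
  h.2.1

lemma mem_RB {Y Z : Finset X} {a : X} :
    a ∈ RB b s C f Y Z ↔ (a ∈ Y ∧ b a = f) ∧ a ∉ C f (Yb b f Y ∪ Zs s f Z) := by
  simp only [RB, CB, Yb, mem_sdiff, mem_filter]
  tauto

lemma UpstreamSubstitutable.mem_choice_of_subset (hB : UpstreamSubstitutable b s C)
    {P Q : Finset X} (hPQ : P ⊆ Q) (hQ : ∀ x ∈ Q, b x = f ∨ s x = f)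
    (hQP : ∀ x ∈ Q, x ∉ P → b x = f) {y : X} (hyP : y ∈ P) (hy : b y = f)
    (hyQ : y ∈ C f Q) : y ∈ C f P := by
  have menuP : Yb b f P ∪ Zs s f P = P := by
    ext x
    have := hQ x
    have := @hPQ x
    simp only [Yb, Zs, mem_union, mem_filter]
    tauto
  have menuQ : Yb b f Q ∪ Zs s f P = Q := by
    ext x
    have := hQ x
    have := hQP x
    have := @hPQ x
    simp only [Yb, Zs, mem_union, mem_filter]
    tauto
  by_contra hyP'
  have hrej := hB f P Q P hPQ (mem_RB.2 ⟨⟨hyP, hy⟩, by rwa [menuP]⟩)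
  rw [mem_RB, menuQ] at hrej
  exact hrej.2 hyQ

omit [DecidableEq F] in
lemma IRC.choice_erase (hirc : IRC C) (hC : ∀ (f : F) (A : Finset X), C f A ⊆ A)
    {Q : Finset X} {t : X} (ht : t ∉ C f Q) : C f (Q.erase t) = C f Q :=
  hirc f Q _ (fun _ hx => mem_erase.2 ⟨fun h => ht (h ▸ hx), hC f Q hx⟩) (erase_subset t Q)

end Choice

section Rational

variable {b s : X → F} {C : F → Finset X → Finset X} {f : F} {A : Finset X}

omit [DecidableEq X] in
lemma Xf_swap (S : Finset X) : Xf s b f S = Xf b s f S :=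
  filter_congr fun _ _ => or_comm

lemma rational_swap {W S : Finset X} : Rational s b C W S f ↔ Rational b s C W S f := by
  simp only [Rational, Xf_swap]

lemma rational_congr {W S S' : Finset X} (h : Xf b s f S = Xf b s f S') :
    Rational b s C W S f ↔ Rational b s C W S' f := by
  rw [Rational, Rational, h]

lemma rational_iff_subset_choice {W S : Finset X} (hS : ∀ x ∈ S, b x = f ∨ s x = f) :
    Rational b s C W S f ↔ S ⊆ C f (Xf b s f W ∪ S) := by
  rw [Rational, show Xf b s f S = S from filter_true_of_mem hS]

lemma rational_singleton_iff {W : Finset X} {y : X} (hy : b y = f ∨ s y = f) :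
    Rational b s C W {y} f ↔ y ∈ C f (Xf b s f W ∪ {y}) := by
  rw [rational_iff_subset_choice (by simpa using hy), singleton_subset_iff]

lemma Rational.singleton_of_forall_buyer (hB : UpstreamSubstitutable b s C) {R : Finset X}
    (hR : Rational b s C A R f) (hRb : ∀ r ∈ R, b r = f) {y : X} (hy : y ∈ R) :
    Rational b s C A {y} f := by
  rw [rational_iff_subset_choice fun r hr => Or.inl (hRb r hr)] at hR
  rw [rational_singleton_iff (Or.inl (hRb y hy))]
  refine hB.mem_choice_of_subset (union_subset_union_right (singleton_subset_iff.2 hy))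
    ?_ ?_ (mem_union_right _ (mem_singleton_self y)) (hRb y hy) (hR hy)
  · intro x hx
    rcases mem_union.1 hx with hx | hx
    · exact (mem_filter.1 hx).2
    · exact Or.inl (hRb x hx)
  · intro x hx hxy
    exact hRb x ((mem_union.1 hx).resolve_left fun h => hxy (mem_union_left _ h))

end Rational

section Support

variable {b s : X → F} {C : F → Finset X → Finset X} {f : F} {Q T : Finset X} {z : X}

omit [DecidableEq F] in
lemma subset_choice_of_minimal (hirc : IRC C) (hC : ∀ (f : F) (A : Finset X), C f A ⊆ A)
    (hQT : Disjoint Q T) (hzC : z ∈ C f (Q ∪ T))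
    (hmin : ∀ w ∈ T, w ≠ z → z ∉ C f (Q ∪ T.erase w)) : T ⊆ C f (Q ∪ T) := by
  intro t ht
  by_contra htC
  have htz : t ≠ z := by rintro rfl; exact htC hzC
  apply hmin t ht htz
  rwa [← erase_eq_of_notMem (disjoint_right.1 hQT ht), ← erase_union_distrib,
    hirc.choice_erase hC htC]

lemma buyer_of_minimal (hS : UpstreamSubstitutable s b C) (hf : ∀ x ∈ Q ∪ T, b x = f ∨ s x = f)
    (hzT : z ∈ T) (hz : s z = f) (hzC : z ∈ C f (Q ∪ T))
    (hmin : ∀ w ∈ T, w ≠ z → z ∉ C f (Q ∪ T.erase w)) : ∀ w ∈ T, w ≠ z → b w = f := by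
  intro w hwT hwz
  by_contra hbw
  refine hmin w hwT hwz (hS.mem_choice_of_subset
    (union_subset_union_right (erase_subset w T)) (fun x hx => (hf x hx).symm) ?_
    (mem_union_right _ (mem_erase.2 ⟨hwz.symm, hzT⟩)) hz hzC)
  intro x hx hxw
  obtain rfl : x = w := by
    simp only [mem_union, mem_erase] at hx hxw
    tauto
  exact (hf x (mem_union_right _ hwT)).resolve_left hbw

/-- Withdrawing the upstream contract `w` keeps `y` chosen but rejects `z`, which IRC then
allows to drop as well. -/
lemma mem_choice_singleton_of_minimal (hB : UpstreamSubstitutable b s C) (hirc : IRC C)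
    (hC : ∀ (f : F) (A : Finset X), C f A ⊆ A) (hf : ∀ x ∈ Q ∪ T, b x = f ∨ s x = f)
    (hQT : Disjoint Q T) (hzT : z ∈ T) (hmin : ∀ w ∈ T, w ≠ z → z ∉ C f (Q ∪ T.erase w))
    (hbuyer : ∀ w ∈ T, w ≠ z → b w = f) {w y : X} (hwT : w ∈ T) (hwz : w ≠ z) (hyT : y ∈ T)
    (hyz : y ≠ z) (hyw : y ≠ w) (hyC : y ∈ C f (Q ∪ T)) : y ∈ C f (Q ∪ {y}) := by
  have hyCw : y ∈ C f (Q ∪ T.erase w) := by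
    refine hB.mem_choice_of_subset (union_subset_union_right (erase_subset w T)) hf
      (fun x hx hxw => ?_) (mem_union_right _ (mem_erase.2 ⟨hyw, hyT⟩)) (hbuyer y hyT hyz) hyC
    obtain rfl : x = w := by
      simp only [mem_union, mem_erase] at hx hxw
      tauto
    exact hbuyer x hwT hwz
  have hyCwz : y ∈ C f (Q ∪ (T.erase w).erase z) := by
    rwa [← erase_eq_of_notMem (disjoint_right.1 hQT hzT), ← erase_union_distrib,
      hirc.choice_erase hC (hmin w hwT hwz)]
  refine hB.mem_choice_of_subset ?_ (fun x hx => ?_) (fun x hx hxy => ?_)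
    (mem_union_right _ (mem_singleton_self y)) (hbuyer y hyT hyz) hyCwz
  · exact union_subset_union_right (singleton_subset_iff.2 (mem_erase.2 ⟨hyz,
      mem_erase.2 ⟨hyw, hyT⟩⟩))
  · exact hf x (union_subset_union_right ((erase_subset _ _).trans (erase_subset _ _)) hx)
  · simp only [mem_union, mem_erase, mem_singleton, not_or] at hx hxy
    exact hbuyer x (hx.resolve_left hxy.1).2.2 (hx.resolve_left hxy.1).1

end Support

section Decomposition

variable {b s : X → F} {C : F → Finset X → Finset X} {f : F}

lemma choice_singleton_or_pair_of_minimal (hB : UpstreamSubstitutable b s C)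
    (hS : UpstreamSubstitutable s b C) (hirc : IRC C) (hC : ∀ (f : F) (A : Finset X), C f A ⊆ A)
    {Q T : Finset X} (hf : ∀ x ∈ Q ∪ T, b x = f ∨ s x = f) (hQT : Disjoint Q T) {z : X}
    (hzT : z ∈ T) (hz : s z = f) (hzC : z ∈ C f (Q ∪ T))
    (hmin : ∀ w ∈ T, w ≠ z → z ∉ C f (Q ∪ T.erase w)) :
    z ∈ C f (Q ∪ {z}) ∨ ∃ p ∈ T, p ≠ z ∧ b p = f ∧
      ({p, z} ⊆ C f (Q ∪ {p, z}) ∨ p ∈ C f (Q ∪ {p})) := by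
  have hchosen := subset_choice_of_minimal hirc hC hQT hzC hmin
  have hbuyer := buyer_of_minimal hS hf hzT hz hzC hmin
  by_cases hsingle : ∀ w ∈ T, w = z
  · left
    rwa [eq_singleton_iff_unique_mem.2 ⟨hzT, hsingle⟩] at hzC
  push Not at hsingle
  obtain ⟨w, hwT, hwz⟩ := hsingle
  right
  by_cases hthird : ∃ y ∈ T, y ≠ z ∧ y ≠ w
  · obtain ⟨y, hyT, hyz, hyw⟩ := hthird
    exact ⟨y, hyT, hyz, hbuyer y hyT hyz, Or.inr (mem_choice_singleton_of_minimal hB hirc hC hf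
      hQT hzT hmin hbuyer hwT hwz hyT hyz hyw (hchosen hyT))⟩
  · push Not at hthird
    have hT : T = {w, z} := by
      ext x
      simp only [mem_insert, mem_singleton]
      refine ⟨fun hx => ?_, by rintro (rfl | rfl) <;> assumption⟩
      by_contra h
      push Not at h
      exact h.1 (hthird x hx h.2)
    refine ⟨w, hwT, hwz, hbuyer w hwT hwz, Or.inl ?_⟩
    rw [← hT]
    exact hchosen

lemma Rational.singleton_or_pair (hB : UpstreamSubstitutable b s C)
    (hS : UpstreamSubstitutable s b C) (hirc : IRC C) (hC : ∀ (f : F) (A : Finset X), C f A ⊆ A)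
    {A N : Finset X} (hN : Rational b s C A N f) (hNA : Disjoint N A) {z : X} (hzN : z ∈ N)
    (hz : s z = f) :
    Rational b s C A {z} f ∨ ∃ p ∈ N, p ≠ z ∧ b p = f ∧
      (Rational b s C A {p, z} f ∨ Rational b s C A {p} f) := by
  have hzN' : z ∈ Xf b s f N := mem_filter.2 ⟨hzN, Or.inr hz⟩
  obtain ⟨T, hTN, hTmin⟩ := exists_minimal_le_of_wellFoundedLT
    (fun T => z ∈ T ∧ z ∈ C f (Xf b s f A ∪ T)) (Xf b s f N) ⟨hzN', hN hzN'⟩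
  obtain ⟨hzT, hzC⟩ := hTmin.prop
  have hf : ∀ x ∈ Xf b s f A ∪ T, b x = f ∨ s x = f := by
    intro x hx
    rcases mem_union.1 hx with hx | hx
    · exact (mem_filter.1 hx).2
    · exact (mem_filter.1 (hTN hx)).2
  have hAT : Disjoint (Xf b s f A) T :=
    (hNA.mono (filter_subset _ N) (filter_subset _ A)).symm.mono_right hTN
  have hmin : ∀ w ∈ T, w ≠ z → z ∉ C f (Xf b s f A ∪ T.erase w) := fun w hw hwz hzC' =>
    hTmin.not_lt ⟨mem_erase.2 ⟨hwz.symm, hzT⟩, hzC'⟩ (erase_ssubset hw)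
  rcases choice_singleton_or_pair_of_minimal hB hS hirc hC hf hAT hzT hz hzC hmin with
    h | ⟨p, hpT, hpz, hp, h | h⟩
  · exact Or.inl ((rational_singleton_iff (Or.inr hz)).2 h)
  · refine Or.inr ⟨p, (filter_subset _ N) (hTN hpT), hpz, hp, Or.inl ?_⟩
    rwa [rational_iff_subset_choice (by simp [hp, hz])]
  · exact Or.inr ⟨p, (filter_subset _ N) (hTN hpT), hpz, hp,
      Or.inr ((rational_singleton_iff (Or.inl hp)).2 h)⟩

end Decomposition

/-- A locally blocking trail without the condition at its last contract. -/
def IsRationalTrail (b s : X → F) (C : F → Finset X → Finset X) (A : Finset X) (M : ℕ)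
    (x : ℕ → X) : Prop :=
  0 < M ∧ (∀ i j, i < M → j < M → x i = x j → i = j) ∧
    (∀ i, i + 1 < M → b (x i) = s (x (i + 1))) ∧ (∀ i, i < M → x i ∉ A) ∧
    Rational b s C A {x 0} (s (x 0)) ∧
    (∀ i, 0 < i → i < M → Rational b s C A {x (i - 1), x i} (b (x (i - 1))))

def TrailReachable (b s : X → F) (C : F → Finset X → Finset X) (A : Finset X) (c : X) : Prop :=
  ∃ M x, IsRationalTrail b s C A M x ∧ x (M - 1) = c

section Trails

variable {b s : X → F} {C : F → Finset X → Finset X} {A : Finset X} {M : ℕ} {x : ℕ → X}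

lemma locallyBlockingTrail_iff : LocallyBlockingTrail b s C A ↔
    ∃ M x, IsRationalTrail b s C A M x ∧ Rational b s C A {x (M - 1)} (b (x (M - 1))) := by
  simp only [LocallyBlockingTrail, IsRationalTrail, and_assoc]

lemma IsRationalTrail.prefix (h : IsRationalTrail b s C A M x) {n : ℕ} (hn : 0 < n)
    (hnM : n ≤ M) : IsRationalTrail b s C A n x := by
  obtain ⟨-, hinj, hlink, hnA, hstart, hpairs⟩ := h
  exact ⟨hn, fun i j hi hj => hinj i j (by omega) (by omega), fun i hi => hlink i (by omega),
    fun i hi => hnA i (by omega), hstart, fun i hi0 hi => hpairs i hi0 (by omega)⟩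

lemma IsRationalTrail.suffix (h : IsRationalTrail b s C A M x) {t : ℕ} (htM : t < M)
    (ht : Rational b s C A {x t} (s (x t))) :
    IsRationalTrail b s C A (M - t) (fun j => x (t + j)) := by
  obtain ⟨-, hinj, hlink, hnA, -, hpairs⟩ := h
  refine ⟨by omega, fun i j hi hj hij => ?_, fun i hi => ?_, fun i hi => hnA _ (by omega),
    ht, fun i hi0 hi => ?_⟩
  · have := hinj _ _ (by omega) (by omega) hij
    omega
  · simpa only [Nat.add_assoc] using hlink (t + i) (by omega)
  · simpa only [Nat.add_sub_assoc hi0] using hpairs (t + i) (by omega) (by omega)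

lemma IsRationalTrail.snoc (h : IsRationalTrail b s C A M x) {q : X} (hq : ∀ j < M, x j ≠ q)
    (hqA : q ∉ A) (hlinkq : b (x (M - 1)) = s q)
    (hpair : Rational b s C A {x (M - 1), q} (b (x (M - 1)))) :
    IsRationalTrail b s C A (M + 1) (fun j => if j < M then x j else q) := by
  obtain ⟨hM, hinj, hlink, hnA, hstart, hpairs⟩ := h
  refine ⟨by omega, fun i j hi hj hij => ?_, fun i hi => ?_, fun i hi => ?_, ?_,
    fun i hi0 hi => ?_⟩
  · by_cases hiM : i < M <;> by_cases hjM : j < M <;> simp only [hiM, hjM, if_true, if_false]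
      at hij
    · exact hinj i j hiM hjM hij
    · exact absurd hij (hq i hiM)
    · exact absurd hij.symm (hq j hjM)
    · omega
  · by_cases hiM : i + 1 < M
    · simpa [hiM, show i < M by omega] using hlink i hiM
    · obtain rfl : i = M - 1 := by omega
      simpa [hM, show ¬ M - 1 + 1 < M by omega, Nat.sub_add_cancel hM] using hlinkq
  · by_cases hiM : i < M
    · simpa [hiM] using hnA i hiM
    · simpa [hiM] using hqA
  · simpa [hM] using hstart
  · by_cases hiM : i < M
    · simpa [hiM, show i - 1 < M by omega] using hpairs i hi0 hiM
    · rw [show i = M by omega]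
      simpa [show M - 1 < M by omega] using hpair

lemma trailReachable_of_rational {c : X} (hcA : c ∉ A) (hc : Rational b s C A {c} (s c)) :
    TrailReachable b s C A c :=
  ⟨1, fun _ => c, ⟨one_pos, fun i j hi hj _ => by omega, fun i hi => by omega, fun _ _ => hcA,
    hc, fun i hi0 hi => by omega⟩, rfl⟩

lemma TrailReachable.extend {p q : X} (hp : TrailReachable b s C A p) (hqA : q ∉ A)
    (hpq : b p = s q) (hpair : Rational b s C A {p, q} (b p)) : TrailReachable b s C A q := by
  obtain ⟨M, x, hx, rfl⟩ := hp
  by_cases hq : ∃ j < M, x j = q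
  · obtain ⟨j, hjM, rfl⟩ := hq
    exact ⟨j + 1, x, hx.prefix (Nat.succ_pos j) hjM, rfl⟩
  · push Not at hq
    exact ⟨M + 1, _, hx.snoc hq hqA hpq hpair, by simp⟩

lemma TrailReachable.locallyBlockingTrail {c : X} (h : TrailReachable b s C A c)
    (hc : Rational b s C A {c} (b c)) : LocallyBlockingTrail b s C A := by
  obtain ⟨M, x, hx, rfl⟩ := h
  exact locallyBlockingTrail_iff.2 ⟨M, x, hx, hc⟩

lemma LocallyBlockingTrail.of_swap (h : LocallyBlockingTrail s b C A) :
    LocallyBlockingTrail b s C A := by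
  obtain ⟨M, x, hM, hinj, hlink, hnA, hstart, hpairs, hend⟩ := h
  refine ⟨M, fun i => x (M - 1 - i), hM, fun i j hi hj hij => ?_, fun i hi => ?_,
    fun i hi => hnA _ (by omega), ?_, fun i hi0 hi => ?_, ?_⟩
  · have := hinj _ _ (by omega) (by omega) hij
    omega
  · have := hlink (M - 1 - (i + 1)) (by omega)
    rw [show M - 1 - (i + 1) + 1 = M - 1 - i by omega] at this
    exact this.symm
  · simpa [rational_swap] using hend
  · have hpair := hpairs (M - i) (by omega) (by omega)
    have hlk := hlink (M - i - 1) (by omega)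
    rw [show M - i - 1 + 1 = M - i by omega] at hlk
    show Rational b s C A {x (M - 1 - (i - 1)), x (M - 1 - i)} (b (x (M - 1 - (i - 1))))
    rw [show M - 1 - (i - 1) = M - i by omega, show M - 1 - i = M - i - 1 by omega, pair_comm,
      ← hlk, ← rational_swap]
    exact hpair
  · simpa [rational_swap, show M - 1 - (M - 1) = 0 by omega] using hstart

end Trails

section BlockingTrails

variable {b s : X → F} {C : F → Finset X → Finset X} {A : Finset X}

/-- Every contract of a blocking trail with rational initial segments is reachable by a rational
trail, unless a locally blocking trail turns up on the way. -/
lemma locallyBlockingTrail_of_initialSegments (hB : UpstreamSubstitutable b s C)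
    (hS : UpstreamSubstitutable s b C) (hirc : IRC C) (hC : ∀ (f : F) (A : Finset X), C f A ⊆ A)
    {M : ℕ} {x : ℕ → X} (hM : 0 < M) (hlink : ∀ i, i + 1 < M → b (x i) = s (x (i + 1)))
    (hnA : ∀ i, i < M → x i ∉ A)
    (hstart : Rational b s C A {x 0} (s (x 0)))
    (hseg : ∀ i, 0 < i → i < M →
      Rational b s C A ((range (i + 1)).image x) (b (x (i - 1))))
    (hend : Rational b s C A {x (M - 1)} (b (x (M - 1)))) :
    LocallyBlockingTrail b s C A := by
  by_contra hnot
  have hreach : ∀ i < M, TrailReachable b s C A (x i) := by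
    intro i
    induction i using Nat.strong_induction_on with
    | _ i ih =>
      intro hiM
      rcases Nat.eq_zero_or_pos i with rfl | hi
      · exact trailReachable_of_rational (hnA 0 hM) hstart
      have hlk : b (x (i - 1)) = s (x i) := by
        simpa [Nat.sub_add_cancel hi] using hlink (i - 1) (by omega)
      have hdisj : Disjoint ((range (i + 1)).image x) A := by
        simp only [disjoint_left, mem_image, mem_range]
        rintro _ ⟨t, ht, rfl⟩
        exact hnA t (by omega)
      rcases (hseg i hi hiM).singleton_or_pair hB hS hirc hC hdisj
          (mem_image_of_mem x (self_mem_range_succ i)) hlk.symm with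
        hz | ⟨p, hp, hpi, hpb, hp'⟩
      · exact trailReachable_of_rational (hnA i hiM) (hlk ▸ hz)
      obtain ⟨t, ht, rfl⟩ := mem_image.1 hp
      have hti : t < i := lt_of_le_of_ne (mem_range_succ_iff.1 ht) (by rintro rfl; exact hpi rfl)
      rw [← hpb] at hp'
      rcases hp' with hpair | hsingle
      · exact (ih t hti (by omega)).extend (hnA i hiM) (hpb.trans hlk) hpair
      · exact (hnot ((ih t hti (by omega)).locallyBlockingTrail hsingle)).elim
  exact hnot ((hreach (M - 1) (by omega)).locallyBlockingTrail hend)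

lemma image_range_sub_eq_image_Ico {M i : ℕ} (x : ℕ → X) (hi : i < M) :
    (range (i + 1)).image (fun j => x (M - 1 - j)) = (Ico (M - 1 - i) M).image x := by
  ext a
  simp only [mem_image, mem_range, mem_Ico]
  constructor
  · rintro ⟨j, hj, rfl⟩
    exact ⟨M - 1 - j, by omega, rfl⟩
  · rintro ⟨k, hk, rfl⟩
    exact ⟨M - 1 - k, by omega, by rw [show M - 1 - (M - 1 - k) = k by omega]⟩

/-- Reversing the trail and exchanging buyers and sellers turns final segments into initial
ones. -/
lemma locallyBlockingTrail_of_finalSegments (hB : UpstreamSubstitutable b s C)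
    (hS : UpstreamSubstitutable s b C) (hirc : IRC C) (hC : ∀ (f : F) (A : Finset X), C f A ⊆ A)
    {M : ℕ} {x : ℕ → X} (hM : 0 < M) (hlink : ∀ i, i + 1 < M → b (x i) = s (x (i + 1)))
    (hnA : ∀ i, i < M → x i ∉ A)
    (hstart : Rational b s C A {x 0} (s (x 0)))
    (hseg : ∀ i, 0 < i → i < M →
      Rational b s C A ((Ico (i - 1) M).image x) (b (x (i - 1))))
    (hend : Rational b s C A {x (M - 1)} (b (x (M - 1)))) :
    LocallyBlockingTrail b s C A := by
  refine LocallyBlockingTrail.of_swap (locallyBlockingTrail_of_initialSegments (b := s) (s := b)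
    (x := fun i => x (M - 1 - i)) hS hB hirc hC hM (fun i hi => ?_)
    (fun i hi => hnA _ (by omega)) ?_ (fun i hi0 hi => ?_) ?_)
  · have := hlink (M - 1 - (i + 1)) (by omega)
    rw [show M - 1 - (i + 1) + 1 = M - 1 - i by omega] at this
    exact this.symm
  · simpa [rational_swap] using hend
  · have hlk := hlink (M - i - 1) (by omega)
    rw [show M - i - 1 + 1 = M - i by omega] at hlk
    rw [rational_swap, image_range_sub_eq_image_Ico x hi, show M - 1 - (i - 1) = M - i by omega,
      ← hlk, show M - 1 - i = M - i - 1 by omega]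
    exact hseg (M - i) (by omega) (by omega)
  · simpa [rational_swap, show M - 1 - (M - 1) = 0 by omega] using hstart

lemma locallyBlockingTrail_of_blockingTrail (hB : UpstreamSubstitutable b s C)
    (hS : UpstreamSubstitutable s b C) (hirc : IRC C) (hC : ∀ (f : F) (A : Finset X), C f A ⊆ A)
    (h : BlockingTrail b s C A) : LocallyBlockingTrail b s C A := by
  obtain ⟨M, x, hM, -, hlink, hnA, hstart, hinit | hfinal, hend⟩ := h
  · exact locallyBlockingTrail_of_initialSegments hB hS hirc hC hM hlink hnA hstart hinit hend
  · exact locallyBlockingTrail_of_finalSegments hB hS hirc hC hM hlink hnA hstart hfinal hend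

end BlockingTrails

section Separability

variable {b s : X → F} {C : F → Finset X → Finset X} {f : F} {A : Finset X}

omit [DecidableEq X] in
lemma Zs_singleton_of_eq {y : X} (h : s y = f) : Zs s f {y} = {y} := by
  simp [Zs, h]

omit [DecidableEq X] in
lemma Zs_singleton_of_ne {y : X} (h : s y ≠ f) : Zs s f {y} = ∅ := by
  simp [Zs, h]

/-- `x t` enters the invariant only when `f` sells it: when `f` buys it, its partner
`x (t + 1)` is still missing, and separability adds the pair at `f` as a whole. -/
lemma rational_initialSegment_of_separable (hsep : Separable b s C) {i : ℕ} {x : ℕ → X}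
    (hinj : ∀ t u, t ≤ i → u ≤ i → x t = x u → t = u)
    (hlink : ∀ t, t < i → b (x t) = s (x (t + 1))) (hloop : ∀ t, t ≤ i → b (x t) ≠ s (x t))
    (hstart : Rational b s C A {x 0} (s (x 0)))
    (hpair : ∀ t, t < i → b (x t) = f → RationalPair b s C A f (x t) (x (t + 1))) :
    ∀ t ≤ i, Rational b s C A ((range t).image x ∪ Zs s f {x t}) f := by
  have hfresh : ∀ t u, t ≤ u → u ≤ i → x u ∉ (range t).image x := by
    intro t u htu hu hmem
    obtain ⟨v, hv, hvu⟩ := mem_image.1 hmem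
    rw [mem_range] at hv
    have := hinj v u (by omega) hu hvu
    omega
  intro t
  induction t with
  | zero =>
    intro _
    by_cases h0 : s (x 0) = f
    · rwa [Zs_singleton_of_eq h0, range_zero, image_empty, empty_union, ← h0]
    · simp [Zs_singleton_of_ne h0, Rational, Xf]
  | succ t ih =>
    intro ht
    have hsucc : (range (t + 1)).image x = insert (x t) ((range t).image x) := by
      rw [range_add_one, image_insert]
    by_cases hb : b (x t) = f
    · have hs : s (x (t + 1)) = f := hlink t (by omega) ▸ hb
      have hs' : s (x t) ≠ f := fun h => hloop t (by omega) (hb.trans h.symm)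
      have hprev : Rational b s C A ((range t).image x) f := by
        simpa [Zs_singleton_of_ne hs'] using ih (by omega)
      convert hsep f _ A (x t) (x (t + 1)) hb hs (hfresh t t le_rfl (by omega))
        (hfresh t (t + 1) (by omega) ht) hprev (hpair t (by omega) hb) using 1
      ext a
      simp only [hsucc, Zs_singleton_of_eq hs, mem_union, mem_insert, mem_singleton]
      tauto
    · have hs : s (x (t + 1)) ≠ f := hlink t (by omega) ▸ hb
      rw [Zs_singleton_of_ne hs, union_empty, hsucc]
      refine (rational_congr ?_).2 (ih (by omega))
      ext a
      simp only [Xf, Zs, mem_filter, mem_insert, mem_union, mem_singleton]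
      constructor
      · rintro ⟨rfl | ha, hf⟩
        · exact ⟨Or.inr ⟨rfl, hf.resolve_left hb⟩, hf⟩
        · exact ⟨Or.inl ha, hf⟩
      · rintro ⟨ha | ⟨rfl, -⟩, hf⟩
        · exact ⟨Or.inr ha, hf⟩
        · exact ⟨Or.inl rfl, hf⟩

lemma IsRationalTrail.buyer_ne_seller (hB : UpstreamSubstitutable b s C) {M : ℕ} {x : ℕ → X}
    (hx : IsRationalTrail b s C A M x) (hM : 1 < M)
    (hbuyer : ∀ t, t + 1 < M → ¬ Rational b s C A {x t} (b (x t)))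
    (hseller : ∀ t, 0 < t → t < M → ¬ Rational b s C A {x t} (s (x t))) {t : ℕ} (ht : t < M) :
    b (x t) ≠ s (x t) := by
  obtain ⟨-, -, hlink, -, hstart, hpairs⟩ := hx
  intro hbs
  rcases Nat.eq_zero_or_pos t with rfl | ht0
  · exact hbuyer 0 hM (hbs ▸ hstart)
  have hlk : b (x (t - 1)) = s (x t) := by
    simpa [Nat.sub_add_cancel ht0] using hlink (t - 1) (by omega)
  apply hseller t ht0 ht
  rw [← hlk]
  refine (hpairs t ht0 ht).singleton_of_forall_buyer hB ?_ (mem_insert_of_mem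
    (mem_singleton_self _))
  simp [hlk, hbs]

/-- In a shortest locally blocking trail no contract is rational on its own except at the two
ends, so consecutive contracts form rational pairs to which separability applies. -/
lemma blockingTrail_of_locallyBlockingTrail (hB : UpstreamSubstitutable b s C)
    (hsep : Separable b s C) (h : LocallyBlockingTrail b s C A) : BlockingTrail b s C A := by
  classical
  rw [locallyBlockingTrail_iff] at h
  obtain ⟨x, hx, hend⟩ := Nat.find_spec h
  set M := Nat.find h
  have hshort : ∀ M' < M, ∀ x', IsRationalTrail b s C A M' x' →
      ¬ Rational b s C A {x' (M' - 1)} (b (x' (M' - 1))) :=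
    fun M' hM' x' hx' hend' => Nat.find_min h hM' ⟨x', hx', hend'⟩
  have hbuyer : ∀ t, t + 1 < M → ¬ Rational b s C A {x t} (b (x t)) := fun t ht hrat =>
    hshort (t + 1) ht x (hx.prefix t.succ_pos ht.le) hrat
  have hseller : ∀ t, 0 < t → t < M → ¬ Rational b s C A {x t} (s (x t)) :=
    fun t ht0 ht hrat => hshort (M - t) (by omega) _ (hx.suffix ht hrat)
      (by rwa [show t + (M - t - 1) = M - 1 by omega])
  have hloop := fun t ht hM => hx.buyer_ne_seller hB hM hbuyer hseller (t := t) ht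
  obtain ⟨hM, hinj, hlink, hnA, hstart, hpairs⟩ := hx
  refine ⟨M, x, hM, hinj, hlink, hnA, hstart, Or.inl fun i hi hiM => ?_, hend⟩
  have hlk : b (x (i - 1)) = s (x i) := by
    simpa [Nat.sub_add_cancel hi] using hlink (i - 1) (by omega)
  have hinit := rational_initialSegment_of_separable (f := b (x (i - 1))) hsep
    (fun t u ht hu => hinj t u (by omega) (by omega)) (fun t ht => hlink t (by omega))
    (fun t ht => hloop t (by omega) (by omega)) hstart
    (fun t ht hbt => ⟨by rw [← hbt]; exact hbuyer t (by omega),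
      by rw [← hbt, hlink t (by omega)]; exact hseller (t + 1) (by omega) (by omega),
      by simpa [hbt] using hpairs (t + 1) (by omega) (by omega)⟩) i le_rfl
  rwa [Zs_singleton_of_eq hlk.symm, union_comm, ← insert_eq, ← image_insert, ← range_add_one]
    at hinit

end Separability

theorem locallyBlockingTrail_iff_blockingTrail {b s : X → F} {C : F → Finset X → Finset X}
    {A : Finset X} (hC : ∀ (f : F) (A : Finset X), C f A ⊆ A) (hfs : FullySubstitutable b s C)
    (hsep : Separable b s C) (hirc : IRC C) :
    LocallyBlockingTrail b s C A ↔ BlockingTrail b s C A :=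
  ⟨blockingTrail_of_locallyBlockingTrail hfs.upstream hsep,
    locallyBlockingTrail_of_blockingTrail hfs.upstream hfs.downstream hirc hC⟩

theorem fullyTrailStable_iff_trailStable_general (b s : X → F)
    (C : F → Finset X → Finset X)
    (hC : ∀ (f : F) (A : Finset X), C f A ⊆ A)
    (hfs : FullySubstitutable b s C) (hsep : Separable b s C) (hirc : IRC C)
    (A : Finset X) :
    FullyTrailStable b s C A ↔ TrailStable b s C A :=
  and_congr_right fun _ => not_congr (locallyBlockingTrail_iff_blockingTrail hC hfs hsep hirc)

/-- under full substitutability, separability and IRC, an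
outcome is fully trail-stable iff it is trail-stable. -/
theorem fullyTrailStable_iff_trailStable [Fintype X] (b s : X → F)
    (C : F → Finset X → Finset X)
    (hC : ∀ (f : F) (A : Finset X), C f A ⊆ A)
    (hfs : FullySubstitutable b s C) (hsep : Separable b s C) (hirc : IRC C)
    (A : Finset X) :
    FullyTrailStable b s C A ↔ TrailStable b s C A :=
  fullyTrailStable_iff_trailStable_general b s C hC hfs hsep hirc A
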